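/- arXiv:2604.12960 — 3 statements merged into one kernel-verified Lean document; each statement's English description precedes it below -/
import Mathlib

section
/- For a nonsingular n × n complex matrix M, the Davis-Wielandt shell of M⁻¹ equals the image of DW(M) under the map (z, ν) ↦ (conj(z)/ν, 1/ν); that is, for every nonzero u, setting v = Mu, we have (⟨v, M⁻¹v⟩/‖v‖², ‖M⁻¹v‖²/‖v‖²) = (conj(⟨u, Mu⟩/‖u‖²)/(‖Mu‖²/‖u‖²), 1/(‖Mu‖²/‖u‖²)), and conversely every point of DW(M⁻¹) arises this way. -/
open scoped BigOperators

/-- Standard inner product on `ℂⁿ`, linear in the second slot. -/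
noncomputable def ip {n : ℕ} (u v : Fin n → ℂ) : ℂ := ∑ i, (starRingEnd ℂ) (u i) * v i

/-- Squared Euclidean norm on `ℂⁿ`. -/
noncomputable def nsq {n : ℕ} (u : Fin n → ℂ) : ℝ := ∑ i, Complex.normSq (u i)

/-- The Davis-Wielandt shell of a matrix. -/
noncomputable def DW {n : ℕ} (M : Matrix (Fin n) (Fin n) ℂ) : Set (ℂ × ℝ) :=
  {p | ∃ u : Fin n → ℂ, u ≠ 0 ∧
    p = (ip u (M.mulVec u) / ((nsq u : ℝ) : ℂ), nsq (M.mulVec u) / nsq u)}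

lemma ip_comm {n : ℕ} (u v : Fin n → ℂ) : ip v u = (starRingEnd ℂ) (ip u v) := by
  unfold ip
  rw [map_sum]
  refine Finset.sum_congr rfl fun i _ => ?_
  simp [mul_comm]

lemma nsq_nonneg {n : ℕ} (u : Fin n → ℂ) : 0 ≤ nsq u :=
  Finset.sum_nonneg fun i _ => Complex.normSq_nonneg _

lemma nsq_ne_zero {n : ℕ} {u : Fin n → ℂ} (h : u ≠ 0) : nsq u ≠ 0 := by
  intro h0
  apply h
  funext i
  have := (Finset.sum_eq_zero_iff_of_nonneg
    (fun i _ => Complex.normSq_nonneg (u i))).mp h0 i (Finset.mem_univ i)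
  exact Complex.normSq_eq_zero.mp this

theorem dw_inverse_shell {n : ℕ} (M : Matrix (Fin n) (Fin n) ℂ) (hM : IsUnit M) :
    DW M⁻¹ = (fun p : ℂ × ℝ => ((starRingEnd ℂ) p.1 / ((p.2 : ℝ) : ℂ), 1 / p.2)) '' DW M := by
  have hdet : IsUnit M.det := (Matrix.isUnit_iff_isUnit_det M).mp hM
  have hMi : ∀ u : Fin n → ℂ, M⁻¹.mulVec (M.mulVec u) = u := by
    intro u
    rw [Matrix.mulVec_mulVec, Matrix.nonsing_inv_mul M hdet, Matrix.one_mulVec]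
  have hMM : ∀ v : Fin n → ℂ, M.mulVec (M⁻¹.mulVec v) = v := by
    intro v
    rw [Matrix.mulVec_mulVec, Matrix.mul_nonsing_inv M hdet, Matrix.one_mulVec]
  ext p
  constructor
  · rintro ⟨v, hv, rfl⟩
    refine ⟨(ip (M⁻¹.mulVec v) (M.mulVec (M⁻¹.mulVec v)) / ((nsq (M⁻¹.mulVec v) : ℝ) : ℂ),
      nsq (M.mulVec (M⁻¹.mulVec v)) / nsq (M⁻¹.mulVec v)), ⟨M⁻¹.mulVec v, ?_, rfl⟩, ?_⟩
    · intro h0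
      apply hv
      rw [← hMM v, h0, Matrix.mulVec_zero]
    · set u := M⁻¹.mulVec v with hu
      have hu0 : u ≠ 0 := by
        intro h0
        apply hv
        rw [← hMM v, ← hu, h0, Matrix.mulVec_zero]
      have hnu : nsq u ≠ 0 := nsq_ne_zero hu0
      have hnv : nsq v ≠ 0 := nsq_ne_zero hv
      have hMu : M.mulVec u = v := hMM v
      rw [hMu]
      have hnuC : ((nsq u : ℝ) : ℂ) ≠ 0 := by exact_mod_cast hnu
      have hnvC : ((nsq v : ℝ) : ℂ) ≠ 0 := by exact_mod_cast hnv
      simp only [Prod.mk.injEq]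
      constructor
      · rw [ip_comm u v, map_div₀]
        simp only [Complex.conj_conj, Complex.conj_ofReal]
        push_cast
        field_simp
      · field_simp
  · rintro ⟨q, ⟨u, hu, rfl⟩, rfl⟩
    refine ⟨M.mulVec u, ?_, ?_⟩
    · intro h0
      apply hu
      rw [← hMi u, h0, Matrix.mulVec_zero]
    · have hnu : nsq u ≠ 0 := nsq_ne_zero hu
      have hMu0 : M.mulVec u ≠ 0 := by
        intro h0
        apply hu
        rw [← hMi u, h0, Matrix.mulVec_zero]
      have hnv : nsq (M.mulVec u) ≠ 0 := nsq_ne_zero hMu0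
      have hnuC : ((nsq u : ℝ) : ℂ) ≠ 0 := by exact_mod_cast hnu
      have hnvC : ((nsq (M.mulVec u) : ℝ) : ℂ) ≠ 0 := by exact_mod_cast hnv
      rw [hMi u]
      simp only [Prod.mk.injEq]
      constructor
      · rw [ip_comm (M.mulVec u) u, ip_comm u (M.mulVec u), map_div₀]
        simp only [Complex.conj_conj, Complex.conj_ofReal]
        push_cast
        field_simp
      · field_simp
end

section
/- If G and Δ are n × n complex matrices such that I + GΔ is singular, then the Davis-Wielandt shells of Δ and of −G⁻¹ (in the 'inverse shell' sense) intersect: there exists a nonzero u with Δu ≠ 0 such that (⟨u, Δu⟩/‖u‖², ‖Δu‖²/‖u‖²) equals (conj(⟨v, −Gv⟩/‖v‖²)/(‖Gv‖²/‖v‖²), ‖v‖²/‖Gv‖²) for some nonzero v with Gv ≠ 0. -/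
open scoped BigOperators

lemma ip_conj {n : ℕ} (u v : Fin n → ℂ) : (starRingEnd ℂ) (ip v u) = ip u v := by
  simp [ip, map_sum, mul_comm]

lemma nsq_pos {n : ℕ} {u : Fin n → ℂ} (hu : u ≠ 0) : 0 < nsq u := by
  have : ∃ i, u i ≠ 0 := by
    by_contra hc
    push_neg at hc
    exact hu (funext hc)
  obtain ⟨i, hi⟩ := this
  have : 0 < Complex.normSq (u i) := by
    simpa [Complex.normSq_pos] using hi
  exact Finset.sum_pos' (fun j _ => Complex.normSq_nonneg _) ⟨i, Finset.mem_univ i, this⟩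

lemma nsq_neg {n : ℕ} (u : Fin n → ℂ) : nsq (-u) = nsq u := by
  simp [nsq]

theorem dw_intersect_of_singular {n : ℕ} (G Δ : Matrix (Fin n) (Fin n) ℂ)
    (h : ¬ IsUnit (1 + G * Δ)) :
    ∃ u : Fin n → ℂ, u ≠ 0 ∧ Δ.mulVec u ≠ 0 ∧
      ∃ v : Fin n → ℂ, v ≠ 0 ∧ G.mulVec v ≠ 0 ∧
        (ip u (Δ.mulVec u) / ((nsq u : ℝ) : ℂ), nsq (Δ.mulVec u) / nsq u)
          = ((starRingEnd ℂ) (ip v ((-G).mulVec v) / ((nsq v : ℝ) : ℂ))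
                / (((nsq (G.mulVec v) / nsq v : ℝ)) : ℂ),
             nsq v / nsq (G.mulVec v)) := by
  have hdet : (1 + G * Δ).det = 0 := by
    by_contra hd
    exact h ((Matrix.isUnit_iff_isUnit_det _).2 (isUnit_iff_ne_zero.2 hd))
  obtain ⟨u, hu0, hker⟩ := (Matrix.exists_mulVec_eq_zero_iff).2 hdet
  set v := Δ.mulVec u with hv
  have hGv : G.mulVec v = -u := by
    have : u + G.mulVec (Δ.mulVec u) = 0 := by
      simpa [Matrix.add_mulVec, Matrix.one_mulVec, Matrix.mulVec_mulVec] using hker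
    simpa [hv] using eq_neg_of_add_eq_zero_right this
  have hv0 : v ≠ 0 := by
    intro hz
    apply hu0
    have := hGv
    rw [hz] at this
    simpa [Matrix.mulVec_zero, neg_eq_zero, eq_comm] using this
  have hGv0 : G.mulVec v ≠ 0 := by
    rw [hGv]; simpa using hu0
  refine ⟨u, hu0, by simpa [hv] using hv0, v, hv0, hGv0, ?_⟩
  have hnu : nsq u ≠ 0 := ne_of_gt (nsq_pos hu0)
  have hnv : nsq v ≠ 0 := ne_of_gt (nsq_pos hv0)
  have hnGv : nsq (G.mulVec v) = nsq u := by rw [hGv, nsq_neg]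
  have hipv : ip v ((-G).mulVec v) = ip v u := by
    simp [Matrix.neg_mulVec, hGv]
  refine Prod.ext ?_ ?_
  · show ip u v / ((nsq u : ℝ) : ℂ) = _
    rw [hipv, hnGv, map_div₀, ip_conj]
    simp only [Complex.conj_ofReal]
    have h1 : ((nsq u : ℝ) : ℂ) ≠ 0 := by exact_mod_cast hnu
    have h2 : ((nsq v : ℝ) : ℂ) ≠ 0 := by exact_mod_cast hnv
    push_cast
    field_simp
  · show nsq v / nsq u = _
    rw [hnGv]
end

section
/- Let γ > 0 and let G be an n × n complex matrix with ‖G‖₂ ≥ 1/γ. Then there exists an n × n complex matrix Δ with ‖Δ‖₂ ≤ γ such that I + GΔ is singular. -/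
/-- The operator 2-norm (largest singular value) of a complex matrix. -/
noncomputable def opNorm2 {n : ℕ} (M : Matrix (Fin n) (Fin n) ℂ) : ℝ :=
  ‖LinearMap.toContinuousLinearMap (Matrix.toEuclideanLin M)‖

/-!
Pick x with ‖x‖ ≤ 1 and ‖G x‖ = ‖G‖ (by compactness of the unit ball). The rank-one map
Δ = -x (G x)ᴴ / ‖G x‖² sends G x to -x, so G x ≠ 0 lies in the kernel of I + G Δ, while
‖Δ‖ = ‖x‖ / ‖G x‖ ≤ 1 / ‖G‖ ≤ γ.
-/

open Metric InnerProductSpace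

theorem ContinuousLinearMap.exists_norm_le_one_norm_apply_eq_opNorm {𝕜 𝕜₂ E F : Type*}
    [NormedAddCommGroup E] [SeminormedAddCommGroup F] [DenselyNormedField 𝕜]
    [NontriviallyNormedField 𝕜₂] [NormedSpace 𝕜 E] [NormedSpace 𝕜₂ F] {σ₁₂ : 𝕜 →+* 𝕜₂}
    [RingHomIsometric σ₁₂] [ProperSpace E] (f : E →SL[σ₁₂] F) :
    ∃ x, ‖x‖ ≤ 1 ∧ ‖f x‖ = ‖f‖ := by
  have hmem := ((isCompact_closedBall (0 : E) 1).image
    (by fun_prop : Continuous fun x ↦ ‖f x‖)).sSup_mem ((nonempty_closedBall.2 zero_le_one).image _)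
  rw [f.sSup_unitClosedBall_eq_norm] at hmem
  obtain ⟨x, hx, hfx⟩ := hmem
  exact ⟨x, mem_closedBall_zero_iff.1 hx, hfx⟩

section

variable {𝕜 E F : Type*} [RCLike 𝕜] [NormedAddCommGroup E] [NormedSpace 𝕜 E]
  [NormedAddCommGroup F] [InnerProductSpace 𝕜 F]

theorem exists_apply_eq_and_norm_eq_div (x : E) {y : F} (hy : y ≠ 0) :
    ∃ D : F →L[𝕜] E, D y = x ∧ ‖D‖ = ‖x‖ / ‖y‖ := by
  have hy' : ‖y‖ ≠ 0 := norm_ne_zero_iff.2 hy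
  refine ⟨rankOne 𝕜 (((‖y‖ : 𝕜) ^ 2)⁻¹ • x) y, ?_, ?_⟩
  · rw [rankOne_apply, inner_self_eq_norm_sq_to_K, smul_smul,
      mul_inv_cancel₀ (by simpa using hy'), one_smul]
  · rw [norm_rankOne, norm_smul, norm_inv, norm_pow, RCLike.norm_ofReal, abs_norm]
    field_simp

theorem exists_opNorm_le_not_isUnit_one_add_comp [ProperSpace E] (T : E →L[𝕜] F) {γ : ℝ}
    (hγ : 0 < γ) (hT : 1 / γ ≤ ‖T‖) : ∃ D : F →L[𝕜] E, ‖D‖ ≤ γ ∧ ¬IsUnit (1 + T ∘L D) := by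
  obtain ⟨x, hx, hTx⟩ := T.exists_norm_le_one_norm_apply_eq_opNorm
  have hTpos : 0 < ‖T‖ := (one_div_pos.2 hγ).trans_le hT
  have hTx_ne : T x ≠ 0 := norm_pos_iff.1 (hTx ▸ hTpos)
  obtain ⟨D, hDTx, hD⟩ := exists_apply_eq_and_norm_eq_div (𝕜 := 𝕜) (-x) hTx_ne
  refine ⟨D, ?_, fun hu ↦ hTx_ne (hu.smul_eq_zero.1 ?_)⟩
  · calc ‖D‖ = ‖x‖ / ‖T‖ := by rw [hD, norm_neg, hTx]
      _ ≤ 1 / ‖T‖ := by gcongr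
      _ ≤ γ := (one_div_le hTpos hγ).2 hT
  · simp [ContinuousLinearMap.smul_def, hDTx]

end

theorem opNorm2_eq_norm_toEuclideanCLM {n : ℕ} (M : Matrix (Fin n) (Fin n) ℂ) :
    opNorm2 M = ‖Matrix.toEuclideanCLM (𝕜 := ℂ) M‖ := rfl

theorem small_gain_necessity {n : ℕ} (γ : ℝ) (hγ : 0 < γ)
    (G : Matrix (Fin n) (Fin n) ℂ) (hG : 1 / γ ≤ opNorm2 G) :
    ∃ Δ : Matrix (Fin n) (Fin n) ℂ, opNorm2 Δ ≤ γ ∧ ¬ IsUnit (1 + G * Δ) := by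
  obtain ⟨D, hD, hsing⟩ := exists_opNorm_le_not_isUnit_one_add_comp
    (Matrix.toEuclideanCLM (𝕜 := ℂ) G) hγ hG
  refine ⟨(Matrix.toEuclideanCLM (𝕜 := ℂ)).symm D,
    by simpa [opNorm2_eq_norm_toEuclideanCLM] using hD, fun hu ↦ hsing ?_⟩
  simpa [ContinuousLinearMap.mul_def] using hu.map (Matrix.toEuclideanCLM (𝕜 := ℂ))
end
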